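/- arXiv:2011.05560 — 4 statements merged into one kernel-verified Lean document; each statement's English description precedes it below -/
import Mathlib

section
/- Let (g, [·,...,·]) be an n-Lie algebra over a field K of characteristic 0 and let α, β : g → g be algebra morphisms (i.e. α([x₁,...,xₙ]) = [α(x₁),...,α(xₙ)] and likewise for β) such that α∘β = β∘α. Define a new n-linear bracket by [x₁,...,xₙ]_{αβ} := [α(x₁),...,α(x_{n−1}),β(xₙ)]. Then (g, [·,...,·]_{αβ}, α, β) is an n-BiHom-Lie algebra. -/
open Function Finset Module

universe u v w

/-- Twist a tuple: apply `a` to the last coordinate and `b` to all the other coordinates,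
so that `twMap a b x = (b x₁, …, b xₙ₋₁, a xₙ)`. -/
def twMap {g : Type v} (a b : g → g) {m : ℕ} (x : Fin (m + 1) → g) : Fin (m + 1) → g :=
  fun i => if i = Fin.last m then a (x i) else b (x i)

/-- An `n`-BiHom-Lie algebra over `K`, where the arity of the bracket is `n = m + 1`. -/
structure NBiHomLie (K : Type u) [Field K] (m : ℕ) (g : Type v)
    [AddCommGroup g] [Module K g] where
  br : MultilinearMap K (fun _ : Fin (m + 1) => g) g
  α : g →ₗ[K] g
  β : g →ₗ[K] g
  comm : ∀ z, α (β z) = β (α z)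
  alpha_br : ∀ x : Fin (m + 1) → g, α (br x) = br fun i => α (x i)
  beta_br : ∀ x : Fin (m + 1) → g, β (br x) = br fun i => β (x i)
  skew : ∀ (x : Fin (m + 1) → g) (i j : Fin (m + 1)), (i : ℕ) + 1 = (j : ℕ) →
    br (twMap ⇑α ⇑β x) = - br (twMap ⇑α ⇑β (x ∘ Equiv.swap i j))
  jacobi : ∀ (x : Fin m → g) (y : Fin (m + 1) → g),
    br (Fin.snoc (fun i => β (β (x i))) (br (twMap ⇑α ⇑β y))) =
      ∑ k : Fin (m + 1), ((-1 : K) ^ (m - (k : ℕ))) •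
        br (Fin.snoc (fun i => β (β (y (k.succAbove i))))
          (br (twMap ⇑α ⇑β (Fin.snoc x (y k)))))

/-- A representation of an `n`-BiHom-Lie algebra (`n = m + 2`) on a vector space `V`. -/
structure NRep {K : Type u} [Field K] {m : ℕ} {g : Type v} [AddCommGroup g] [Module K g]
    (L : NBiHomLie K (m + 1) g) (V : Type w) [AddCommGroup V] [Module K V] where
  ρ : MultilinearMap K (fun _ : Fin (m + 1) => g) (Module.End K V)
  αV : V →ₗ[K] V
  βV : V →ₗ[K] V
  rep1 : ∀ x : Fin (m + 1) → g, ρ (fun i => L.α (x i)) ∘ₗ αV = αV ∘ₗ ρ x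
  rep2 : ∀ x : Fin (m + 1) → g, ρ (fun i => L.β (x i)) ∘ₗ βV = βV ∘ₗ ρ x
  rep3 : ∀ x y : Fin (m + 1) → g,
    ρ (fun i => L.α (L.β (x i))) ∘ₗ ρ y - ρ (fun i => L.β (y i)) ∘ₗ ρ (fun i => L.α (x i)) =
      ∑ i : Fin (m + 1),
        ρ (Function.update (fun j => L.β (y j)) i
            (L.br (Fin.snoc (fun j => L.β (x j)) (y i)))) ∘ₗ βV
  rep4 : ∀ x y : Fin (m + 1) → g,
    ρ (Fin.snoc (fun j : Fin m => L.β (y j.succ))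
        (L.br (Fin.snoc (fun j => L.β (x j)) (y 0)))) ∘ₗ βV =
      (∑ i : Fin (m + 1), ((-1 : K) ^ (m + 1 - (i : ℕ))) •
        (ρ (Fin.snoc (fun j : Fin m => L.α (L.β (x (i.succAbove j)))) (L.β (y 0))) ∘ₗ
          ρ (Fin.snoc (fun j : Fin m => y j.succ) (L.α (x i))))) +
        ρ (fun i => L.α (L.β (x i))) ∘ₗ ρ y
/-- An `n`-Lie algebra (Filippov algebra) over `K`, where the arity is `n = m + 1`. -/
structure NLie (K : Type u) [Field K] (m : ℕ) (g : Type v)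
    [AddCommGroup g] [Module K g] where
  br : MultilinearMap K (fun _ : Fin (m + 1) => g) g
  skew : ∀ (x : Fin (m + 1) → g) (i j : Fin (m + 1)), i ≠ j →
    br (x ∘ Equiv.swap i j) = - br x
  filippov : ∀ (x : Fin m → g) (y : Fin (m + 1) → g),
    br (Fin.snoc x (br y)) =
      ∑ i : Fin (m + 1), br (Function.update y i (br (Fin.snoc x (y i))))

/-- A representation of an `n`-Lie algebra (`n = m + 2`) on a vector space `V`. -/
structure NLieRep {K : Type u} [Field K] {m : ℕ} {g : Type v} [AddCommGroup g] [Module K g]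
    (L : NLie K (m + 1) g) (V : Type w) [AddCommGroup V] [Module K V] where
  ρ : MultilinearMap K (fun _ : Fin (m + 1) => g) (Module.End K V)
  repa : ∀ x y : Fin (m + 1) → g,
    ρ x ∘ₗ ρ y - ρ y ∘ₗ ρ x =
      ∑ i : Fin (m + 1), ρ (Function.update y i (L.br (Fin.snoc x (y i))))
  repb : ∀ x y : Fin (m + 1) → g,
    ρ (Fin.snoc (fun j : Fin m => y j.succ) (L.br (Fin.snoc x (y 0)))) =
      (∑ i : Fin (m + 1), ((-1 : K) ^ (m + 1 - (i : ℕ))) •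
        (ρ (Fin.snoc (fun j : Fin m => x (i.succAbove j)) (y 0)) ∘ₗ
          ρ (Fin.snoc (fun j : Fin m => y j.succ) (x i)))) + ρ x ∘ₗ ρ y

/-- An `n`-cocycle (`n = m + 2`) on an `n`-BiHom-Lie algebra `L` with values in a
representation `R`. -/
def IsNCocycle {K : Type u} [Field K] {m : ℕ} {g : Type v} {V : Type w}
    [AddCommGroup g] [Module K g] [AddCommGroup V] [Module K V]
    (L : NBiHomLie K (m + 1) g) (R : NRep L V)
    (θ : (Fin (m + 2) → g) → V) : Prop :=
  (∀ x, R.αV (θ x) = θ fun i => L.α (x i)) ∧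
  (∀ x, R.βV (θ x) = θ fun i => L.β (x i)) ∧
  (∀ (x : Fin (m + 2) → g) (i j : Fin (m + 2)), (i : ℕ) + 1 = (j : ℕ) →
    θ (fun k => L.β (x k)) = - θ (fun k => L.β (x (Equiv.swap i j k)))) ∧
  (∀ (x : Fin (m + 1) → g) (y : Fin (m + 2) → g),
    θ (Fin.snoc (fun i => L.β (L.β (x i))) (L.br (twMap ⇑L.α ⇑L.β y))) +
        R.ρ (fun i => L.β (L.β (x i))) (θ (twMap ⇑L.α ⇑L.β y)) =
      ∑ k : Fin (m + 2), ((-1 : K) ^ (m + 1 - (k : ℕ))) •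
        (θ (Fin.snoc (fun i : Fin (m + 1) => L.β (L.β (y (k.succAbove i))))
              (L.br (twMap ⇑L.α ⇑L.β (Fin.snoc x (y k))))) +
          R.ρ (fun i => L.β (L.β (y (k.succAbove i))))
            (θ (twMap ⇑L.α ⇑L.β (Fin.snoc x (y k))))))

/-- An `n`-cocycle (`n = m + 2`) with values in the coadjoint representation
`ad*(x₁,…,xₙ₋₁)(f) = - f ∘ ad(x₁,…,xₙ₋₁)` on the dual space `g*`. -/
def IsCoadCocycle {K : Type u} [Field K] {m : ℕ} {g : Type v}
    [AddCommGroup g] [Module K g] (L : NBiHomLie K (m + 1) g)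
    (θ : (Fin (m + 2) → g) → Module.Dual K g) : Prop :=
  (∀ (x : Fin (m + 2) → g) (z : g), θ x (L.α z) = θ (fun i => L.α (x i)) z) ∧
  (∀ (x : Fin (m + 2) → g) (z : g), θ x (L.β z) = θ (fun i => L.β (x i)) z) ∧
  (∀ (x : Fin (m + 2) → g) (i j : Fin (m + 2)), (i : ℕ) + 1 = (j : ℕ) →
    θ (fun k => L.β (x k)) = - θ (fun k => L.β (x (Equiv.swap i j k)))) ∧
  (∀ (x : Fin (m + 1) → g) (y : Fin (m + 2) → g) (z : g),
    θ (Fin.snoc (fun i => L.β (L.β (x i))) (L.br (twMap ⇑L.α ⇑L.β y))) z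
        - θ (twMap ⇑L.α ⇑L.β y) (L.br (Fin.snoc (fun i => L.β (L.β (x i))) z)) =
      ∑ k : Fin (m + 2), ((-1 : K) ^ (m + 1 - (k : ℕ))) •
        (θ (Fin.snoc (fun i : Fin (m + 1) => L.β (L.β (y (k.succAbove i))))
              (L.br (twMap ⇑L.α ⇑L.β (Fin.snoc x (y k))))) z
          - θ (twMap ⇑L.α ⇑L.β (Fin.snoc x (y k)))
              (L.br (Fin.snoc (fun i => L.β (L.β (y (k.succAbove i)))) z))))

/-- `S` is the `T*_θ`-extension of the `n`-BiHom-Lie algebra `L` (`n = m + 2`) by the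
cocycle `θ`, built from the coadjoint representation. -/
def IsTStarExt {K : Type u} [Field K] {m : ℕ} {g : Type v}
    [AddCommGroup g] [Module K g] (L : NBiHomLie K (m + 1) g)
    (θ : (Fin (m + 2) → g) → Module.Dual K g)
    (S : NBiHomLie K (m + 1) (g × Module.Dual K g)) : Prop :=
  (∀ p : g × Module.Dual K g, S.α p = (L.α p.1, p.2 ∘ₗ L.α)) ∧
  (∀ p : g × Module.Dual K g, S.β p = (L.β p.1, p.2 ∘ₗ L.β)) ∧
  (∀ z : Fin (m + 2) → g × Module.Dual K g, (S.br z).1 = L.br fun i => (z i).1) ∧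
  (∀ (z : Fin (m + 2) → g × Module.Dual K g) (w : g),
    (S.br z).2 w = θ (fun i => (z i).1) w
      + (∑ i : Fin (m + 1), ((-1 : K) ^ (m + 1 - (i : ℕ))) •
          (- (z i.castSucc).2 (Function.invFun ⇑L.β (L.α (L.br
              (Fin.snoc (Fin.snoc (fun j : Fin m => (z ((i.succAbove j).castSucc)).1)
                (Function.invFun ⇑L.α (L.β ((z (Fin.last (m + 1))).1)))) w))))))
      + (- (z (Fin.last (m + 1))).2
            (L.br (Fin.snoc (fun j : Fin (m + 1) => (z j.castSucc).1) w))))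
/-- The derived series of an `n`-BiHom-Lie algebra (`n = m + 1`):
`g⁽⁰⁾ = g`, `g⁽ᵖ⁺¹⁾ = [g⁽ᵖ⁾, …, g⁽ᵖ⁾, g]`. -/
def nbhlDerivedSeries {K : Type u} [Field K] {m : ℕ} {g : Type v} [AddCommGroup g] [Module K g]
    (L : NBiHomLie K m g) : ℕ → Submodule K g
  | 0 => ⊤
  | p + 1 => Submodule.span K
      {z | ∃ (a : Fin m → g) (b : g), (∀ i, a i ∈ nbhlDerivedSeries L p) ∧ z = L.br (Fin.snoc a b)}

/-- The central descending series of an `n`-BiHom-Lie algebra (`n = m + 1`):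
`g⁰ = g`, `gᵖ⁺¹ = [gᵖ, g, …, g]`. -/
def nbhlCentralSeries {K : Type u} [Field K] {m : ℕ} {g : Type v} [AddCommGroup g] [Module K g]
    (L : NBiHomLie K m g) : ℕ → Submodule K g
  | 0 => ⊤
  | p + 1 => Submodule.span K
      {z | ∃ (a : g) (b : Fin m → g), a ∈ nbhlCentralSeries L p ∧ z = L.br (Fin.cons a b)}

/-- `(L, B)` is a quadratic `n`-BiHom-Lie algebra (`n = m + 1`): the bilinear form `B` is
nondegenerate, symmetric, `αβ`-invariant and `α`, `β` are `B`-symmetric. -/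
def IsQuadratic {K : Type u} [Field K] {m : ℕ} {E : Type v} [AddCommGroup E] [Module K E]
    (L : NBiHomLie K m E) (B : E → E → K) : Prop :=
  (∀ x, (∀ y, B x y = 0) → x = 0) ∧
  (∀ x y, B x y = B y x) ∧
  (∀ (x : Fin m → E) (u v : E),
    B (L.br (twMap ⇑L.α ⇑L.β (Fin.snoc x u))) (L.α v) =
      - B (L.α u) (L.br (twMap ⇑L.α ⇑L.β (Fin.snoc x v)))) ∧
  (∀ x y, B (L.α x) y = B x (L.α y)) ∧
  (∀ x y, B (L.β x) y = B x (L.β y))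

/-- `f` is a `1`-cochain of the `n`-BiHom-Lie algebra `L`. -/
def IsCochain1 {K : Type u} [Field K] {m : ℕ} {g : Type v} [AddCommGroup g] [Module K g]
    (L : NBiHomLie K m g) (f : g → g) : Prop :=
  (∀ z, f (L.α z) = L.α (f z)) ∧ (∀ z, f (L.β z) = L.β (f z))

/-- `c` is a `2`-cochain of the `n`-BiHom-Lie algebra `L` (`n = m + 1`). -/
def IsCochain2 {K : Type u} [Field K] {m : ℕ} {g : Type v} [AddCommGroup g] [Module K g]
    (L : NBiHomLie K m g) (c : (Fin (m + 1) → g) → g) : Prop :=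
  (∀ x, L.α (c x) = c fun i => L.α (x i)) ∧ (∀ x, L.β (c x) = c fun i => L.β (x i))

/-- `d` is a `3`-cochain of the `n`-BiHom-Lie algebra `L` (`n = m + 1`). -/
def IsCochain3 {K : Type u} [Field K] {m : ℕ} {g : Type v} [AddCommGroup g] [Module K g]
    (L : NBiHomLie K m g) (d : (Fin m → g) → (Fin (m + 1) → g) → g) : Prop :=
  (∀ x y, L.α (d x y) = d (fun i => L.α (x i)) fun i => L.α (y i)) ∧
  (∀ x y, L.β (d x y) = d (fun i => L.β (x i)) fun i => L.β (y i))

/-- The first coboundary operator `δ¹` of an `n`-BiHom-Lie algebra (`n = m + 1`). -/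
def delta1 {K : Type u} [Field K] {m : ℕ} {g : Type v} [AddCommGroup g] [Module K g]
    (L : NBiHomLie K m g) (f : g → g) : (Fin (m + 1) → g) → g :=
  fun x => - f (L.br x) + ∑ i : Fin (m + 1), L.br (Function.update x i (f (x i)))

/-- The second coboundary operator `δ²` of an `n`-BiHom-Lie algebra (`n = m + 1`). -/
def delta2 {K : Type u} [Field K] {m : ℕ} {g : Type v} [AddCommGroup g] [Module K g]
    (L : NBiHomLie K m g) (c : (Fin (m + 1) → g) → g) :
    (Fin m → g) → (Fin (m + 1) → g) → g :=
  fun x y =>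
    L.br (Fin.snoc (fun i => L.β (L.β (x i))) (c (twMap ⇑L.α ⇑L.β y))) +
      c (Fin.snoc (fun i => L.β (L.β (x i))) (L.br (twMap ⇑L.α ⇑L.β y))) -
      ∑ i : Fin (m + 1), ((-1 : K) ^ (m - (i : ℕ))) •
        (L.br (Fin.snoc (fun j : Fin m => L.β (L.β (y (i.succAbove j))))
            (c (twMap ⇑L.α ⇑L.β (Fin.snoc x (y i))))) +
          c (Fin.snoc (fun j : Fin m => L.β (L.β (y (i.succAbove j))))
            (L.br (twMap ⇑L.α ⇑L.β (Fin.snoc x (y i))))))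

/-- `F` is a one-parameter formal deformation `f_t = Σ_p F p · tᵖ` of the
`n`-BiHom-Lie algebra `L` (`n = m + 1`). -/
def IsDeformation {K : Type u} [Field K] {m : ℕ} {g : Type v} [AddCommGroup g] [Module K g]
    (L : NBiHomLie K m g) (F : ℕ → MultilinearMap K (fun _ : Fin (m + 1) => g) g) : Prop :=
  (∀ x, F 0 x = L.br x) ∧
  (∀ (p : ℕ) (x : Fin (m + 1) → g), L.α (F p x) = F p fun i => L.α (x i)) ∧
  (∀ (p : ℕ) (x : Fin (m + 1) → g), L.β (F p x) = F p fun i => L.β (x i)) ∧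
  (∀ (l : ℕ) (x : Fin m → g) (y : Fin (m + 1) → g),
    ∑ p ∈ Finset.range (l + 1),
        F p (Fin.snoc (fun i => L.β (L.β (x i))) (F (l - p) (twMap ⇑L.α ⇑L.β y))) =
      ∑ k : Fin (m + 1), ((-1 : K) ^ (m - (k : ℕ))) •
        ∑ p ∈ Finset.range (l + 1),
          F p (Fin.snoc (fun j => L.β (L.β (y (k.succAbove j))))
            (F (l - p) (twMap ⇑L.α ⇑L.β (Fin.snoc x (y k))))))

/-- `Ψ` is a formal automorphism exhibiting the equivalence of the deformations
`F` and `F'` of the `n`-BiHom-Lie algebra `L` (`n = m + 1`). -/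
def IsEquivDeform {K : Type u} [Field K] {m : ℕ} {g : Type v} [AddCommGroup g] [Module K g]
    (L : NBiHomLie K m g) (F F' : ℕ → MultilinearMap K (fun _ : Fin (m + 1) => g) g)
    (Ψ : ℕ → (g →ₗ[K] g)) : Prop :=
  (∀ z, Ψ 0 z = z) ∧
  (∀ (i : ℕ) (z : g), Ψ i (L.α z) = L.α (Ψ i z)) ∧
  (∀ (i : ℕ) (z : g), Ψ i (L.β z) = L.β (Ψ i z)) ∧
  (∀ (l : ℕ) (x : Fin (m + 1) → g),
    ∑ p ∈ Finset.range (l + 1), Ψ p (F (l - p) x) =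
      ∑ p ∈ Finset.range (l + 1),
        ∑ c ∈ Fintype.piFinset (fun _ : Fin (m + 1) => Finset.range (l + 1)),
          if p + ∑ i, c i = l then F' p (fun i => Ψ (c i) (x i)) else 0)
/-- The data of a `T*_θ`-extension: an `n`-BiHom-Lie algebra `B` (`n = m + 2`), an
`n`-cocycle `θ : Bⁿ → B*` for the coadjoint representation satisfying the symmetry
condition, and the resulting quadratic `n`-BiHom-Lie algebra structure on `B ⊕ B*`. -/
structure TStarExtData (K : Type u) [Field K] (m : ℕ) where
  B : Type v
  [addB : AddCommGroup B]
  [modB : Module K B]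
  LB : NBiHomLie K (m + 1) B
  θ : MultilinearMap K (fun _ : Fin (m + 2) => B) (Module.Dual K B)
  hθ : IsCoadCocycle LB ⇑θ
  hθsym : ∀ (x : Fin (m + 1) → B) (u v : B),
    θ (twMap ⇑LB.α ⇑LB.β (Fin.snoc x u)) (LB.α v) +
      θ (twMap ⇑LB.α ⇑LB.β (Fin.snoc x v)) (LB.α u) = 0
  S : NBiHomLie K (m + 1) (B × Module.Dual K B)
  hS : IsTStarExt LB ⇑θ S

attribute [instance] TStarExtData.addB TStarExtData.modB

/-!
Since `α` and `β` are commuting morphisms, `[twMap α β x]_{αβ} = [αβ x₁, …, αβ xₙ]`, and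
applying `β` once more turns every bracket of the BiHom-Jacobi identity into an ordinary
bracket of tuples hit by `γ = αβ²`. BiHom-skewsymmetry is then skew-symmetry of `[·,…,·]`,
and the BiHom-Jacobi identity is the Filippov identity for `γ x` and `γ y`, once the updated
slot of each Filippov term is moved to the end: a cyclic permutation, which produces the sign.
-/

theorem map_comp_perm_of_map_comp_swap {ι M N : Type*} [DecidableEq ι] [Fintype ι]
    [AddCommGroup N] (f : (ι → M) → N)
    (hf : ∀ (x : ι → M) (i j : ι), i ≠ j → f (x ∘ Equiv.swap i j) = - f x)
    (σ : Equiv.Perm ι) (x : ι → M) : f (x ∘ σ) = Equiv.Perm.sign σ • f x := by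
  induction σ using Equiv.Perm.swap_induction_on generalizing x with
  | one => simp
  | swap_mul σ i j hij ih =>
    rw [Equiv.Perm.coe_mul, ← Function.comp_assoc, ih, hf x i j hij, Equiv.Perm.sign_mul,
      Equiv.Perm.sign_swap hij, mul_smul, Units.neg_smul, one_smul, smul_neg]

section TwMap

variable {g : Type v} {m : ℕ}

theorem twMap_snoc (a b : g → g) (p : Fin m → g) (q : g) :
    twMap a b (Fin.snoc p q) = Fin.snoc (fun i => b (p i)) (a q) := by
  funext j
  induction j using Fin.lastCases with
  | last => simp [twMap]
  | cast j => simp [twMap, (Fin.castSucc_lt_last j).ne]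

theorem twMap_twMap (a b c d : g → g) (x : Fin (m + 1) → g) :
    twMap a b (twMap c d x) = twMap (a ∘ c) (b ∘ d) x := by
  funext i
  by_cases h : i = Fin.last m <;> simp [twMap, h]

theorem twMap_self (a : g → g) (x : Fin (m + 1) → g) : twMap a a x = fun i => a (x i) := by
  funext i
  simp [twMap]

theorem comp_twMap (f a b : g → g) (x : Fin (m + 1) → g) :
    (fun i => f (twMap a b x i)) = twMap (f ∘ a) (f ∘ b) x := by
  funext i
  by_cases h : i = Fin.last m <;> simp [twMap, h]

theorem twMap_comp (a b f : g → g) (x : Fin (m + 1) → g) :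
    twMap a b (fun i => f (x i)) = twMap (a ∘ f) (b ∘ f) x := rfl

end TwMap

namespace NLie

variable {K : Type u} [Field K] {m : ℕ} {g : Type v} [AddCommGroup g] [Module K g]

theorem br_comp_perm (L : NLie K m g) (σ : Equiv.Perm (Fin (m + 1))) (x : Fin (m + 1) → g) :
    L.br (x ∘ σ) = ((Equiv.Perm.sign σ : ℤ) : K) • L.br x := by
  rw [map_comp_perm_of_map_comp_swap _ L.skew, Units.smul_def, Int.cast_smul_eq_zsmul]

theorem br_update_eq_smul_br_snoc (L : NLie K m g) (y : Fin (m + 1) → g) (k : Fin (m + 1))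
    (w : g) :
    L.br (Function.update y k w) =
      ((-1 : K) ^ (m - (k : ℕ))) • L.br (Fin.snoc (y ∘ k.succAbove) w) := by
  set r : Fin m → g := y ∘ k.succAbove
  -- both tuples are `Fin.cons w r` permuted by a cycle, of sign `(-1)^k` resp. `(-1)^m`
  have hupdate : Function.update y k w = Fin.cons w r ∘ k.cycleRange := by
    rw [Fin.cons_comp_cycleRange, ← Fin.insertNth_removeNth]; rfl
  have hsnoc : Fin.snoc r w = Fin.cons w r ∘ (Fin.last m).cycleRange := by
    rw [Fin.cons_comp_cycleRange, Fin.insertNth_last']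
  rw [hupdate, hsnoc, br_comp_perm, br_comp_perm, Fin.sign_cycleRange, Fin.sign_cycleRange,
    smul_smul]
  congr 1
  have hk : (k : ℕ) ≤ m := Fin.is_le k
  push_cast [Fin.val_last]
  rw [← pow_add, show m - k + m = k + 2 * (m - k) by omega, pow_add, pow_mul, neg_one_sq,
    one_pow, mul_one]

def twistBr (L : NLie K m g) (α β : g →ₗ[K] g) : MultilinearMap K (fun _ : Fin (m + 1) => g) g :=
  L.br.compLinearMap fun i => if i = Fin.last m then β else α

theorem twistBr_apply (L : NLie K m g) (α β : g →ₗ[K] g) (x : Fin (m + 1) → g) :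
    L.twistBr α β x = L.br (twMap ⇑β ⇑α x) := by
  simp only [twistBr, MultilinearMap.compLinearMap_apply]
  congr 1
  funext i
  by_cases h : i = Fin.last m <;> simp [twMap, h]

section Twist

variable {L : NLie K m g} {α β : g →ₗ[K] g}

theorem map_twistBr (f : g →ₗ[K] g) (hf : ∀ x, f (L.br x) = L.br fun i => f (x i))
    (hfα : ∀ z, f (α z) = α (f z)) (hfβ : ∀ z, f (β z) = β (f z)) (x : Fin (m + 1) → g) :
    f (L.twistBr α β x) = L.twistBr α β fun i => f (x i) := by
  rw [twistBr_apply, twistBr_apply, hf, comp_twMap, twMap_comp,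
    show ⇑f ∘ ⇑α = ⇑α ∘ ⇑f from funext hfα, show ⇑f ∘ ⇑β = ⇑β ∘ ⇑f from funext hfβ]

theorem twistBr_twMap (hcomm : ∀ z, α (β z) = β (α z)) (x : Fin (m + 1) → g) :
    L.twistBr α β (twMap ⇑α ⇑β x) = L.br fun i => α (β (x i)) := by
  rw [twistBr_apply, twMap_twMap, show ⇑β ∘ ⇑α = ⇑α ∘ ⇑β from funext fun z => (hcomm z).symm,
    twMap_self]
  rfl

theorem twistBr_skew (hcomm : ∀ z, α (β z) = β (α z)) (x : Fin (m + 1) → g)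
    (i j : Fin (m + 1)) (hij : (i : ℕ) + 1 = (j : ℕ)) :
    L.twistBr α β (twMap ⇑α ⇑β x) = - L.twistBr α β (twMap ⇑α ⇑β (x ∘ Equiv.swap i j)) := by
  have hne : i ≠ j := fun h => by rw [h] at hij; omega
  rw [twistBr_twMap hcomm, twistBr_twMap hcomm, ← L.skew _ i j hne]
  congr 1
  funext k
  simp

theorem beta_twistBr_twMap (hβ : ∀ x : Fin (m + 1) → g, β (L.br x) = L.br fun i => β (x i))
    (hcomm : ∀ z, α (β z) = β (α z)) (x : Fin (m + 1) → g) :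
    β (L.twistBr α β (twMap ⇑α ⇑β x)) = L.br fun i => α (β (β (x i))) := by
  rw [twistBr_twMap hcomm, hβ]
  simp only [← hcomm]

theorem twistBr_jacobi (hβ : ∀ x : Fin (m + 1) → g, β (L.br x) = L.br fun i => β (x i))
    (hcomm : ∀ z, α (β z) = β (α z)) (x : Fin m → g) (y : Fin (m + 1) → g) :
    L.twistBr α β (Fin.snoc (fun i => β (β (x i))) (L.twistBr α β (twMap ⇑α ⇑β y))) =
      ∑ k : Fin (m + 1), ((-1 : K) ^ (m - (k : ℕ))) •
        L.twistBr α β (Fin.snoc (fun i => β (β (y (k.succAbove i))))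
          (L.twistBr α β (twMap ⇑α ⇑β (Fin.snoc x (y k))))) := by
  set γ : g → g := fun z => α (β (β z))
  have hsnoc : ∀ (p : Fin m → g) (q : g),
      L.twistBr α β (Fin.snoc (fun i => β (β (p i))) q) = L.br (Fin.snoc (γ ∘ p) (β q)) := by
    intro p q
    rw [twistBr_apply, twMap_snoc]
    rfl
  simp only [hsnoc, beta_twistBr_twMap hβ hcomm]
  change L.br (Fin.snoc (γ ∘ x) (L.br (γ ∘ y))) = ∑ k : Fin (m + 1), _ •
    L.br (Fin.snoc (γ ∘ y ∘ k.succAbove) (L.br (γ ∘ Fin.snoc x (y k))))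
  rw [L.filippov]
  refine Finset.sum_congr rfl fun k _ => ?_
  rw [Fin.comp_snoc, L.br_update_eq_smul_br_snoc]
  rfl

end Twist

def yauTwist (L : NLie K m g) (α β : g →ₗ[K] g)
    (hα : ∀ x : Fin (m + 1) → g, α (L.br x) = L.br fun i => α (x i))
    (hβ : ∀ x : Fin (m + 1) → g, β (L.br x) = L.br fun i => β (x i))
    (hcomm : ∀ z, α (β z) = β (α z)) : NBiHomLie K m g where
  br := L.twistBr α β
  α := α
  β := β
  comm := hcomm
  alpha_br := map_twistBr α hα (fun _ => rfl) hcomm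
  beta_br := map_twistBr β hβ (fun z => (hcomm z).symm) fun _ => rfl
  skew := twistBr_skew hcomm
  jacobi := twistBr_jacobi hβ hcomm

end NLie

/-- **Yau twist.** If `(g,[·,…,·])` is an `n`-Lie algebra and `α, β : g → g` are commuting
algebra morphisms, then `(g, [·,…,·]_{αβ}, α, β)` with
`[x₁,…,xₙ]_{αβ} = [α(x₁),…,α(xₙ₋₁),β(xₙ)]` is an `n`-BiHom-Lie algebra. -/
theorem yau_twist_nBiHomLie {K : Type u} [Field K] {m : ℕ} {g : Type v}
    [AddCommGroup g] [Module K g] (L : NLie K m g) (α β : g →ₗ[K] g)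
    (hα : ∀ x : Fin (m + 1) → g, α (L.br x) = L.br fun i => α (x i))
    (hβ : ∀ x : Fin (m + 1) → g, β (L.br x) = L.br fun i => β (x i))
    (hcomm : ∀ z, α (β z) = β (α z)) :
    ∃ L' : NBiHomLie K m g, L'.α = α ∧ L'.β = β ∧
      ∀ x : Fin (m + 1) → g, L'.br x = L.br (twMap ⇑β ⇑α x) :=
  ⟨L.yauTwist α β hα hβ hcomm, rfl, rfl, L.twistBr_apply α β⟩
end

section
/- Let (g, [·,...,·], α, β) be an n-BiHom-Lie algebra with α and β bijective, (V, ρ, α_V, β_V) a representation with α and β_V bijective, θ an n-cocycle associated with ρ, and f: g → V a linear map with f∘α = α_V∘f and f∘β = β_V∘f, with associated n-cocycle θ_f(x₁,...,xₙ) = f([x₁,...,xₙ]) − Σ_{i=1}^{n−1} (−1)^{n−i} ρ(x₁,...,x_{i−1},x_{i+1},...,x_{n−1},α^{−1}β(xₙ)) f(αβ^{−1}(x_i)) − ρ(x₁,...,x_{n−1}) f(xₙ). Then the map σ: T_θ(g) → T_{θ+θ_f}(g) defined by σ(v+x) = v + f(v) + x for v ∈ g, x ∈ V is an isomorphism of n-BiHom-Lie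 algebras. -/
open Function Finset Module

universe u v w

/-- **`σ : T_θ(g) → T_{θ+θ_f}(g)` is an isomorphism.** With `θ` an `n`-cocycle
(`n = m + 2`), `f : g → V` compatible with the structure maps and `θ_f` the associated
cocycle, the map `σ(v + x) = v + f(v) + x` is an isomorphism of `n`-BiHom-Lie algebras
from the `T_θ`-extension `S` to the `T_{θ+θ_f}`-extension `S'`. -/
theorem sigma_isomorphism {K : Type u} [Field K] {m : ℕ} {g : Type v} {V : Type w}
    [AddCommGroup g] [Module K g] [AddCommGroup V] [Module K V]
    (L : NBiHomLie K (m + 1) g) (R : NRep L V)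
    (hα : Function.Bijective ⇑L.α) (hβ : Function.Bijective ⇑L.β)
    (hβV : Function.Bijective ⇑R.βV)
    (θ : MultilinearMap K (fun _ : Fin (m + 2) => g) V) (hθ : IsNCocycle L R ⇑θ)
    (f : g →ₗ[K] V)
    (hfα : ∀ z, f (L.α z) = R.αV (f z)) (hfβ : ∀ z, f (L.β z) = R.βV (f z))
    (θf : MultilinearMap K (fun _ : Fin (m + 2) => g) V)
    (hθf : ∀ x : Fin (m + 2) → g,
      θf x = f (L.br x)
        - ∑ i : Fin (m + 1), ((-1 : K) ^ (m + 1 - (i : ℕ))) •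
            R.ρ (Fin.snoc (fun j : Fin m => x ((i.succAbove j).castSucc))
                (Function.invFun ⇑L.α (L.β (x (Fin.last (m + 1))))))
              (f (L.α (Function.invFun ⇑L.β (x i.castSucc))))
        - R.ρ (fun j : Fin (m + 1) => x j.castSucc) (f (x (Fin.last (m + 1)))))
    (S S' : NBiHomLie K (m + 1) (g × V))
    (hSα : ∀ p : g × V, S.α p = (L.α p.1, R.αV p.2))
    (hSβ : ∀ p : g × V, S.β p = (L.β p.1, R.βV p.2))
    (hSbr : ∀ z : Fin (m + 2) → g × V,
      S.br z = (L.br fun i => (z i).1,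
        θ (fun i => (z i).1) +
        (∑ i : Fin (m + 1), ((-1 : K) ^ (m + 1 - (i : ℕ))) •
          R.ρ (Fin.snoc (fun j : Fin m => (z ((i.succAbove j).castSucc)).1)
              (Function.invFun ⇑L.α (L.β ((z (Fin.last (m + 1))).1))))
            (R.αV (Function.invFun ⇑R.βV ((z i.castSucc).2)))) +
          R.ρ (fun j : Fin (m + 1) => (z j.castSucc).1) ((z (Fin.last (m + 1))).2)))
    (hS'α : ∀ p : g × V, S'.α p = (L.α p.1, R.αV p.2))
    (hS'β : ∀ p : g × V, S'.β p = (L.β p.1, R.βV p.2))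
    (hS'br : ∀ z : Fin (m + 2) → g × V,
      S'.br z = (L.br fun i => (z i).1,
        (θ (fun i => (z i).1) + θf (fun i => (z i).1)) +
        (∑ i : Fin (m + 1), ((-1 : K) ^ (m + 1 - (i : ℕ))) •
          R.ρ (Fin.snoc (fun j : Fin m => (z ((i.succAbove j).castSucc)).1)
              (Function.invFun ⇑L.α (L.β ((z (Fin.last (m + 1))).1))))
            (R.αV (Function.invFun ⇑R.βV ((z i.castSucc).2)))) +
          R.ρ (fun j : Fin (m + 1) => (z j.castSucc).1) ((z (Fin.last (m + 1))).2))) :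
    ∀ σ : g × V → g × V, (∀ p, σ p = (p.1, f p.1 + p.2)) →
      IsLinearMap K σ ∧ Function.Bijective σ ∧
      (∀ p, σ (S.α p) = S'.α (σ p)) ∧ (∀ p, σ (S.β p) = S'.β (σ p)) ∧
      (∀ z : Fin (m + 2) → g × V, σ (S.br z) = S'.br fun i => σ (z i)) := by
  intro σ hσ
  have hβVinj := hβV.injective
  have hrV : ∀ v : V, R.βV (Function.invFun ⇑R.βV v) = v :=
    fun v => Function.rightInverse_invFun hβV.surjective v
  have hrβ : ∀ a : g, L.β (Function.invFun ⇑L.β a) = a :=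
    fun a => Function.rightInverse_invFun hβ.surjective a
  have hinv_add : ∀ a b : V, Function.invFun ⇑R.βV (a + b)
      = Function.invFun ⇑R.βV a + Function.invFun ⇑R.βV b := by
    intro a b
    apply hβVinj
    rw [map_add, hrV, hrV, hrV]
  have hfinv : ∀ a : g, Function.invFun ⇑R.βV (f a) = f (Function.invFun ⇑L.β a) := by
    intro a
    apply hβVinj
    rw [hrV, ← hfβ, hrβ]
  have key : ∀ x : g × V, R.αV (Function.invFun ⇑R.βV (f x.1 + x.2))
      = f (L.α (Function.invFun ⇑L.β x.1)) + R.αV (Function.invFun ⇑R.βV x.2) := by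
    intro x
    rw [hinv_add, hfinv, map_add, ← hfα]
  refine ⟨⟨?_, ?_⟩, ?_, ?_, ?_, ?_⟩
  · intro p q
    simp only [hσ, Prod.fst_add, Prod.snd_add, map_add, Prod.mk_add_mk]
    ext <;> simp <;> abel
  · intro c p
    simp only [hσ, Prod.smul_fst, Prod.smul_snd, map_smul, Prod.smul_mk, smul_add]
  · refine Function.bijective_iff_has_inverse.mpr ⟨fun p => (p.1, p.2 - f p.1), ?_, ?_⟩ <;>
      intro p <;> simp [hσ]
  · intro p
    simp only [hσ, hSα, hS'α]
    ext <;> simp [hfα, map_add]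
  · intro p
    simp only [hσ, hSβ, hS'β]
    ext <;> simp [hfβ, map_add]
  · intro z
    rw [hSbr, hσ, hS'br]
    ext
    · simp [hσ]
    · simp only [hσ, hθf, key, map_add, smul_add, Finset.sum_add_distrib]
      abel
end

section
/- Let (g, [·,...,·], α, β) be an n-BiHom-Lie algebra such that the T*_θ-extension g ⊕ g* (with bracket [·,...,·]_θ built from the coadjoint representation ad* and an n-cocycle θ: g^n → g*) is an n-BiHom-Lie algebra. If g is solvable, then (g ⊕ g*, [·,...,·]_θ, α+α̃, β+β̃) is solvable. -/
open Function Finset Module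

universe u v w

section SolvAux

variable {K : Type u} [Field K] {g : Type v} [AddCommGroup g] [Module K g]

private lemma snoc_comp {α : Type*} {β' : Type*} {n : ℕ} (f : α → β') (a : Fin n → α) (b : α) :
    (fun i => f ((Fin.snoc a b : Fin (n + 1) → α) i)) =
      (Fin.snoc (fun i => f (a i)) (f b) : Fin (n + 1) → β') := by
  funext i
  refine Fin.lastCases ?_ (fun j => ?_) i <;> simp

private lemma twMap_last' {m : ℕ} (a b : g → g) (x : Fin (m + 1) → g) :
    twMap a b x (Fin.last m) = a (x (Fin.last m)) := by
  simp [twMap]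

private lemma twMap_castSucc' {m : ℕ} (a b : g → g) (x : Fin (m + 1) → g) (j : Fin m) :
    twMap a b x (Fin.castSucc j) = b (x (Fin.castSucc j)) := by
  simp [twMap, (Fin.castSucc_lt_last j).ne]

/-- The first components of the derived series of the `T*_θ`-extension lie in the
derived series of the base algebra. -/
private lemma tstar_derived_fst {m : ℕ} (L : NBiHomLie K (m + 1) g)
    (θ : MultilinearMap K (fun _ : Fin (m + 2) => g) (Module.Dual K g))
    (S : NBiHomLie K (m + 1) (g × Module.Dual K g)) (hS : IsTStarExt L ⇑θ S)
    (p : ℕ) : nbhlDerivedSeries S p ≤ (nbhlDerivedSeries L p).prod ⊤ := by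
  induction p with
  | zero =>
    rw [nbhlDerivedSeries, nbhlDerivedSeries, Submodule.prod_top]
  | succ p ih =>
    rw [nbhlDerivedSeries]
    apply Submodule.span_le.mpr
    rintro z ⟨a, b, ha, rfl⟩
    refine Submodule.mem_prod.mpr ⟨?_, trivial⟩
    rw [hS.2.2.1, snoc_comp Prod.fst a b, nbhlDerivedSeries]
    exact Submodule.subset_span
      ⟨_, _, fun i => (Submodule.mem_prod.mp (ih (ha i))).1, rfl⟩

/-- A linear inverse of a bijective linear map. -/
private noncomputable def invLin (h : g →ₗ[K] g) (hh : Function.Bijective ⇑h) : g →ₗ[K] g where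
  toFun := Function.invFun ⇑h
  map_add' x y := hh.1 (by
    rw [Function.invFun_eq (hh.2 (x + y)), map_add,
      Function.invFun_eq (hh.2 x), Function.invFun_eq (hh.2 y)])
  map_smul' c x := hh.1 (by
    rw [Function.invFun_eq (hh.2 (c • x)), RingHom.id_apply, map_smul,
      Function.invFun_eq (hh.2 x)])

private lemma invLin_apply (h : g →ₗ[K] g) (hh : Function.Bijective ⇑h) (x : g) :
    invLin h hh x = Function.invFun ⇑h x := rfl

/-- The derived series of an `n`-BiHom-Lie algebra is invariant under `α`, `β` and
their inverses (for `n = 2`, which is the only case where we need it). -/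
private lemma aux_stab (L : NBiHomLie K 1 g)
    (hα : Function.Bijective ⇑L.α) (hβ : Function.Bijective ⇑L.β) (p : ℕ) :
    ∀ x ∈ nbhlDerivedSeries L p,
      L.α x ∈ nbhlDerivedSeries L p ∧ L.β x ∈ nbhlDerivedSeries L p ∧
      Function.invFun ⇑L.α x ∈ nbhlDerivedSeries L p ∧
      Function.invFun ⇑L.β x ∈ nbhlDerivedSeries L p := by
  induction p with
  | zero => intro x _; exact ⟨trivial, trivial, trivial, trivial⟩
  | succ p ih =>
    have key : ∀ (f : g →ₗ[K] g),
        (∀ (a : Fin 1 → g) (b : g), (∀ i, a i ∈ nbhlDerivedSeries L p) →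
          f (L.br (Fin.snoc a b)) ∈ nbhlDerivedSeries L (p + 1)) →
        ∀ x ∈ nbhlDerivedSeries L (p + 1), f x ∈ nbhlDerivedSeries L (p + 1) := by
      intro f hf x hx
      have hle : nbhlDerivedSeries L (p + 1) ≤
          Submodule.comap f (nbhlDerivedSeries L (p + 1)) := by
        conv_lhs => rw [nbhlDerivedSeries]
        apply Submodule.span_le.mpr
        rintro z ⟨a, b, ha, rfl⟩
        exact hf a b ha
      exact hle hx
    intro x hx
    refine ⟨?_, ?_, ?_, ?_⟩
    · refine key L.α ?_ x hx
      intro a b ha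
      rw [L.alpha_br, snoc_comp ⇑L.α a b, nbhlDerivedSeries]
      exact Submodule.subset_span ⟨_, _, fun i => (ih _ (ha i)).1, rfl⟩
    · refine key L.β ?_ x hx
      intro a b ha
      rw [L.beta_br, snoc_comp ⇑L.β a b, nbhlDerivedSeries]
      exact Submodule.subset_span ⟨_, _, fun i => (ih _ (ha i)).2.1, rfl⟩
    · refine key (invLin L.α hα) ?_ x hx
      intro a b ha
      have : invLin L.α hα (L.br (Fin.snoc a b)) =
          L.br (Fin.snoc (fun i => Function.invFun ⇑L.α (a i)) (Function.invFun ⇑L.α b)) := by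
        apply hα.1
        rw [invLin_apply, Function.invFun_eq (hα.2 _), L.alpha_br,
          snoc_comp ⇑L.α (fun i => Function.invFun ⇑L.α (a i)) (Function.invFun ⇑L.α b)]
        congr 1
        funext i
        refine Fin.lastCases ?_ (fun j => ?_) i
        · rw [Fin.snoc_last, Fin.snoc_last]
          exact (Function.invFun_eq (hα.2 b)).symm
        · rw [Fin.snoc_castSucc, Fin.snoc_castSucc]
          exact (Function.invFun_eq (hα.2 (a j))).symm
      rw [this, nbhlDerivedSeries]
      exact Submodule.subset_span ⟨_, _, fun i => (ih _ (ha i)).2.2.1, rfl⟩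
    · refine key (invLin L.β hβ) ?_ x hx
      intro a b ha
      have : invLin L.β hβ (L.br (Fin.snoc a b)) =
          L.br (Fin.snoc (fun i => Function.invFun ⇑L.β (a i)) (Function.invFun ⇑L.β b)) := by
        apply hβ.1
        rw [invLin_apply, Function.invFun_eq (hβ.2 _), L.beta_br,
          snoc_comp ⇑L.β (fun i => Function.invFun ⇑L.β (a i)) (Function.invFun ⇑L.β b)]
        congr 1
        funext i
        refine Fin.lastCases ?_ (fun j => ?_) i
        · rw [Fin.snoc_last, Fin.snoc_last]
          exact (Function.invFun_eq (hβ.2 b)).symm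
        · rw [Fin.snoc_castSucc, Fin.snoc_castSucc]
          exact (Function.invFun_eq (hβ.2 (a j))).symm
      rw [this, nbhlDerivedSeries]
      exact Submodule.subset_span ⟨_, _, fun i => (ih _ (ha i)).2.2.2, rfl⟩

/-- For a binary BiHom-Lie algebra, a bracket with an element of `g⁽ᵖ⁾` in the *last*
slot lands in `g⁽ᵖ⁺¹⁾`, via BiHom-skew-symmetry. -/
private lemma aux_br (L : NBiHomLie K 1 g)
    (hα : Function.Bijective ⇑L.α) (hβ : Function.Bijective ⇑L.β)
    (p : ℕ) (c y : g) (hy : y ∈ nbhlDerivedSeries L p) :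
    L.br (Fin.snoc (fun _ : Fin 1 => c) y) ∈ nbhlDerivedSeries L (p + 1) := by
  set x : Fin 2 → g :=
    Fin.snoc (fun _ : Fin 1 => Function.invFun ⇑L.β c) (Function.invFun ⇑L.α y) with hxdef
  have hx : twMap ⇑L.α ⇑L.β x = Fin.snoc (fun _ : Fin 1 => c) y := by
    funext i
    refine Fin.lastCases ?_ (fun j => ?_) i
    · rw [Fin.snoc_last, twMap_last', hxdef, Fin.snoc_last]
      exact Function.invFun_eq (hα.2 y)
    · have hj : j = 0 := Subsingleton.elim _ _
      subst hj
      rw [Fin.snoc_castSucc, twMap_castSucc', hxdef, Fin.snoc_castSucc]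
      exact Function.invFun_eq (hβ.2 c)
  have hx2 : twMap ⇑L.α ⇑L.β (x ∘ Equiv.swap (0 : Fin 2) 1) =
      Fin.snoc (fun _ : Fin 1 => L.β (Function.invFun ⇑L.α y))
        (L.α (Function.invFun ⇑L.β c)) := by
    funext i
    refine Fin.lastCases ?_ (fun j => ?_) i
    · rw [Fin.snoc_last, twMap_last', Function.comp_apply]
      have h1 : Equiv.swap (0 : Fin 2) 1 (Fin.last 1) = Fin.castSucc (0 : Fin 1) := by decide
      rw [h1, hxdef, Fin.snoc_castSucc]
    · have hj : j = 0 := Subsingleton.elim _ _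
      subst hj
      rw [Fin.snoc_castSucc, twMap_castSucc', Function.comp_apply]
      have h1 : Equiv.swap (0 : Fin 2) 1 (Fin.castSucc (0 : Fin 1)) = Fin.last 1 := by decide
      rw [h1, hxdef, Fin.snoc_last]
  have hskew := L.skew x 0 1 (by decide)
  rw [hx, hx2] at hskew
  rw [hskew, nbhlDerivedSeries]
  refine neg_mem (Submodule.subset_span ⟨_, _, fun i => ?_, rfl⟩)
  exact ((aux_stab L hα hβ p _ ((aux_stab L hα hβ p y hy).2.2.1)).2.1)

/-- The generating sets tracking second components in the binary case. -/
private def auxGen (L : NBiHomLie K 1 g) (q : ℕ) : Set (g × Module.Dual K g) :=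
  {z | z.1 = 0 ∧ ∃ (f : Module.Dual K g) (N : g →ₗ[K] g),
    (∀ (p : ℕ) (x : g), x ∈ nbhlDerivedSeries L p → N x ∈ nbhlDerivedSeries L (q + p)) ∧
    z.2 = f ∘ₗ N}

private lemma aux_core (L : NBiHomLie K 1 g)
    (hα : Function.Bijective ⇑L.α) (hβ : Function.Bijective ⇑L.β)
    (θ : MultilinearMap K (fun _ : Fin 2 => g) (Module.Dual K g))
    (S : NBiHomLie K 1 (g × Module.Dual K g)) (hS : IsTStarExt L ⇑θ S)
    (q : ℕ) (f : Module.Dual K g) (N : g →ₗ[K] g)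
    (hN : ∀ (p : ℕ) (x : g), x ∈ nbhlDerivedSeries L p →
      N x ∈ nbhlDerivedSeries L (q + p))
    (b : g × Module.Dual K g) :
    S.br (Fin.snoc (fun _ : Fin 1 => ((0 : g), f ∘ₗ N)) b) ∈ auxGen L (q + 1) := by
  set a0 : g × Module.Dual K g := ((0 : g), f ∘ₗ N) with ha0def
  set z : Fin 2 → g × Module.Dual K g := Fin.snoc (fun _ : Fin 1 => a0) b with hzdef
  have hz0 : z (Fin.castSucc (0 : Fin 1)) = a0 := by rw [hzdef, Fin.snoc_castSucc]
  have hzlast : z (Fin.last 1) = b := by rw [hzdef, Fin.snoc_last]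
  set c' : g := Function.invFun ⇑L.α (L.β b.1) with hc'def
  set Adc : g →ₗ[K] g :=
    MultilinearMap.toLinearMap L.br (Fin.snoc (fun _ : Fin 1 => c') 0) (Fin.last 1) with hAdcdef
  have hAd : ∀ w, Adc w = L.br (Fin.snoc (fun _ : Fin 1 => c') w) := by
    intro w
    rw [hAdcdef]
    show L.br (Function.update (Fin.snoc (fun _ : Fin 1 => c') 0) (Fin.last 1) w) = _
    rw [Fin.update_snoc_last]
  set N' : g →ₗ[K] g := N ∘ₗ (invLin L.β hβ ∘ₗ (L.α ∘ₗ Adc)) with hN'def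
  have hN' : ∀ (p : ℕ) (x : g), x ∈ nbhlDerivedSeries L p →
      N' x ∈ nbhlDerivedSeries L (q + 1 + p) := by
    intro p x hx
    have h1 : Adc x ∈ nbhlDerivedSeries L (p + 1) := by
      rw [hAd]; exact aux_br L hα hβ p c' x hx
    have h2 : L.α (Adc x) ∈ nbhlDerivedSeries L (p + 1) :=
      (aux_stab L hα hβ (p + 1) _ h1).1
    have h3 : Function.invFun ⇑L.β (L.α (Adc x)) ∈ nbhlDerivedSeries L (p + 1) :=
      (aux_stab L hα hβ (p + 1) _ h2).2.2.2
    have h4 := hN (p + 1) _ h3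
    have heq : q + (p + 1) = q + 1 + p := by omega
    rw [heq] at h4
    exact h4
  have hfst : (S.br z).1 = 0 := by
    rw [hS.2.2.1]
    refine L.br.map_coord_zero (Fin.castSucc (0 : Fin 1)) ?_
    rw [hz0]
  have hsnd : (S.br z).2 = f ∘ₗ N' := by
    ext w
    rw [hS.2.2.2]
    have hθ0 : θ (fun i => (z i).1) = 0 := by
      refine θ.map_coord_zero (Fin.castSucc (0 : Fin 1)) ?_
      rw [hz0]
    have h3 : L.br (Fin.snoc (fun j : Fin 1 => (z j.castSucc).1) w) = 0 := by
      refine L.br.map_coord_zero (Fin.castSucc (0 : Fin 1)) ?_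
      rw [Fin.snoc_castSucc, hz0]
    have htuple : (Fin.snoc (Fin.snoc
        (fun j : Fin 0 => (z (((0 : Fin 1).succAbove j).castSucc)).1)
        (Function.invFun ⇑L.α (L.β ((z (Fin.last 1)).1)))) w : Fin 2 → g) =
        Fin.snoc (fun _ : Fin 1 => c') w := by
      congr 1
    have ha2 : a0.2 = f ∘ₗ N := by rw [ha0def]
    have hsign : ((-1 : K) ^ (0 + 1 - ((0 : Fin 1) : ℕ))) = -1 := by norm_num
    rw [Fin.sum_univ_one, hθ0, h3, htuple, hz0, hzlast, ha2, hsign]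
    simp only [LinearMap.zero_apply, map_zero, neg_zero, add_zero, zero_add,
      neg_one_smul, neg_neg, hN'def, LinearMap.coe_comp, Function.comp_apply,
      invLin_apply]
    rw [hAd]
  exact ⟨hfst, f, N', hN', hsnd⟩

private lemma aux_step (L : NBiHomLie K 1 g)
    (hα : Function.Bijective ⇑L.α) (hβ : Function.Bijective ⇑L.β)
    (θ : MultilinearMap K (fun _ : Fin 2 => g) (Module.Dual K g))
    (S : NBiHomLie K 1 (g × Module.Dual K g)) (hS : IsTStarExt L ⇑θ S)
    (q : ℕ) (b : g × Module.Dual K g) :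
    ∀ a0 ∈ Submodule.span K (auxGen L q),
      S.br (Fin.snoc (fun _ : Fin 1 => a0) b) ∈ Submodule.span K (auxGen L (q + 1)) := by
  set T : (g × Module.Dual K g) →ₗ[K] (g × Module.Dual K g) :=
    MultilinearMap.toLinearMap S.br (Fin.snoc (fun _ : Fin 1 => 0) b)
      (Fin.castSucc (0 : Fin 1)) with hTdef
  have hT : ∀ v, T v = S.br (Fin.snoc (fun _ : Fin 1 => v) b) := by
    intro v
    have hupd : Function.update
        (Fin.snoc (fun _ : Fin 1 => (0 : g × Module.Dual K g)) b :
          Fin 2 → g × Module.Dual K g)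
        (Fin.castSucc (0 : Fin 1)) v =
        (Fin.snoc (fun _ : Fin 1 => v) b : Fin 2 → g × Module.Dual K g) := by
      funext i
      refine Fin.lastCases ?_ (fun j => ?_) i
      · rw [Function.update_of_ne (by decide : (Fin.last 1) ≠ Fin.castSucc (0 : Fin 1)),
          Fin.snoc_last, Fin.snoc_last]
      · have hj : j = 0 := Subsingleton.elim _ _
        subst hj
        rw [Function.update_self, Fin.snoc_castSucc]
    rw [hTdef]
    show S.br (Function.update (Fin.snoc (fun _ : Fin 1 => 0) b)
      (Fin.castSucc (0 : Fin 1)) v) = _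
    rw [hupd]
  intro a0 ha0
  have hle : Submodule.span K (auxGen L q) ≤
      Submodule.comap T (Submodule.span K (auxGen L (q + 1))) := by
    apply Submodule.span_le.mpr
    rintro v ⟨hv1, f, N, hN, hv2⟩
    have hv : v = ((0 : g), f ∘ₗ N) := Prod.ext hv1 hv2
    have : T v ∈ auxGen L (q + 1) := by
      rw [hT, hv]
      exact aux_core L hα hβ θ S hS q f N hN b
    exact Submodule.subset_span this
  have := hle ha0
  rw [Submodule.mem_comap, hT] at this
  exact this

private lemma aux_chain (L : NBiHomLie K 1 g)
    (hα : Function.Bijective ⇑L.α) (hβ : Function.Bijective ⇑L.β)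
    (θ : MultilinearMap K (fun _ : Fin 2 => g) (Module.Dual K g))
    (S : NBiHomLie K 1 (g × Module.Dual K g)) (hS : IsTStarExt L ⇑θ S)
    (k : ℕ) (hk : nbhlDerivedSeries L k = ⊥) :
    ∀ q, nbhlDerivedSeries S (k + 1 + q) ≤ Submodule.span K (auxGen L q) := by
  intro q
  induction q with
  | zero =>
    rw [Nat.add_zero, nbhlDerivedSeries]
    apply Submodule.span_le.mpr
    rintro z ⟨a, b, ha, rfl⟩
    apply Submodule.subset_span
    have hfst : ∀ i, (a i).1 = 0 := by
      intro i
      have h := tstar_derived_fst L θ S hS k (ha i)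
      rw [hk] at h
      exact (Submodule.mem_prod.mp h).1
    constructor
    · rw [hS.2.2.1]
      refine L.br.map_coord_zero (Fin.castSucc (0 : Fin 1)) ?_
      rw [Fin.snoc_castSucc]
      exact hfst 0
    · refine ⟨(S.br (Fin.snoc a b)).2, LinearMap.id, ?_, (LinearMap.comp_id _).symm⟩
      intro p x hx
      rw [Nat.zero_add]
      exact hx
  | succ q ih =>
    show nbhlDerivedSeries S ((k + 1 + q) + 1) ≤ _
    rw [nbhlDerivedSeries]
    apply Submodule.span_le.mpr
    rintro z ⟨a, b, ha, rfl⟩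
    have haeq : (fun _ : Fin 1 => a 0) = a := by
      funext i
      have hi : i = 0 := Subsingleton.elim _ _
      rw [hi]
    rw [← haeq]
    exact aux_step L hα hβ θ S hS q b (a 0) (ih (ha 0))

end SolvAux

/-- **Solvability of the `T*_θ`-extension.** Let `(g,[·,…,·],α,β)` be an `n`-BiHom-Lie
algebra (`n = m + 2`) whose `T*_θ`-extension `g ⊕ g*` (built from the coadjoint
representation and an `n`-cocycle `θ`) is again an `n`-BiHom-Lie algebra `S`. If `g` is
solvable, then so is `S`. -/
theorem tstar_extension_solvable {K : Type u} [Field K] {m : ℕ} {g : Type v}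
    [AddCommGroup g] [Module K g] (L : NBiHomLie K (m + 1) g)
    (hα : Function.Bijective ⇑L.α) (hβ : Function.Bijective ⇑L.β)
    (θ : MultilinearMap K (fun _ : Fin (m + 2) => g) (Module.Dual K g))
    (hθ : IsCoadCocycle L ⇑θ)
    (S : NBiHomLie K (m + 1) (g × Module.Dual K g)) (hS : IsTStarExt L ⇑θ S)
    (hsolv : ∃ k, nbhlDerivedSeries L k = ⊥) :
    ∃ k, nbhlDerivedSeries S k = ⊥ := by
  obtain ⟨k, hk⟩ := hsolv
  cases m with
  | zero =>
    refine ⟨k + 1 + k, ?_⟩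
    rw [eq_bot_iff]
    refine le_trans (aux_chain L hα hβ θ S hS k hk k) ?_
    apply Submodule.span_le.mpr
    rintro z ⟨hz1, f, N, hN, hz2⟩
    have hN0 : ∀ x, N x = 0 := by
      intro x
      have hx0 : x ∈ nbhlDerivedSeries L 0 := by rw [nbhlDerivedSeries]; trivial
      have h := hN 0 x hx0
      rw [Nat.add_zero, hk, Submodule.mem_bot] at h
      exact h
    have hz : z = 0 := by
      refine Prod.ext hz1 ?_
      rw [hz2]
      ext w
      simp [hN0 w]
    rw [hz]
    exact Submodule.zero_mem ⊥
  | succ m' =>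
    refine ⟨k + 1, ?_⟩
    rw [eq_bot_iff, nbhlDerivedSeries]
    apply Submodule.span_le.mpr
    rintro z ⟨a, b, ha, rfl⟩
    have hfst : ∀ i, (a i).1 = 0 := by
      intro i
      have h := tstar_derived_fst L θ S hS k (ha i)
      rw [hk] at h
      exact (Submodule.mem_prod.mp h).1
    have hinvβ0 : Function.invFun ⇑L.β (0 : g) = 0 := by
      have : Function.invFun ⇑L.β (L.β 0) = 0 := Function.leftInverse_invFun hβ.1 0
      rwa [map_zero] at this
    have key : S.br (Fin.snoc a b) = 0 := by
      refine Prod.ext ?_ ?_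
      · rw [hS.2.2.1]
        refine L.br.map_coord_zero (Fin.castSucc (0 : Fin (m' + 1 + 1))) ?_
        rw [Fin.snoc_castSucc]
        exact hfst 0
      · ext w
        rw [hS.2.2.2]
        have t1 : θ (fun i => ((Fin.snoc a b :
            Fin (m' + 1 + 2) → g × Module.Dual K g) i).1) = 0 := by
          refine θ.map_coord_zero (Fin.castSucc (0 : Fin (m' + 1 + 1))) ?_
          rw [Fin.snoc_castSucc]
          exact hfst 0
        have t3 : L.br (Fin.snoc (fun j : Fin (m' + 1 + 1) =>
            ((Fin.snoc a b : Fin (m' + 1 + 2) → g × Module.Dual K g) j.castSucc).1) w) = 0 := by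
          refine L.br.map_coord_zero (Fin.castSucc (0 : Fin (m' + 1 + 1))) ?_
          rw [Fin.snoc_castSucc, Fin.snoc_castSucc]
          exact hfst 0
        have t2 : ∀ i : Fin (m' + 1 + 1), L.br (Fin.snoc (Fin.snoc
            (fun j : Fin (m' + 1) =>
              ((Fin.snoc a b : Fin (m' + 1 + 2) → g × Module.Dual K g)
                ((i.succAbove j).castSucc)).1)
            (Function.invFun ⇑L.α (L.β (((Fin.snoc a b : Fin (m' + 1 + 2) →
              g × Module.Dual K g) (Fin.last (m' + 1 + 1))).1)))) w) = 0 := by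
          intro i
          refine L.br.map_coord_zero
            (Fin.castSucc (Fin.castSucc (0 : Fin (m' + 1)))) ?_
          rw [Fin.snoc_castSucc, Fin.snoc_castSucc, Fin.snoc_castSucc]
          exact hfst _
        rw [t1]
        simp only [t2, t3, map_zero, hinvβ0, neg_zero, smul_zero,
          Finset.sum_const_zero, add_zero, zero_add, LinearMap.zero_apply,
          Prod.snd_zero]
    rw [key]
    exact Submodule.zero_mem ⊥
end

section
/- Let (g, [·,...,·], α, β) be an n-BiHom-Lie algebra such that the T*_θ-extension g ⊕ g* (with bracket [·,...,·]_θ built from the coadjoint representation ad* and an n-cocycle θ: g^n → g*) is an n-BiHom-Lie algebra. If g is nilpotent, then (g ⊕ g*, [·,...,·]_θ, α+α̃, β+β̃) is nilpotent. -/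
open Function Finset Module

universe u v w

section AuxNilp

variable {K : Type u} [Field K] {g : Type v} [AddCommGroup g] [Module K g]

lemma nbhlCS_zero {n : ℕ} (L : NBiHomLie K n g) : nbhlCentralSeries L 0 = ⊤ := rfl

lemma nbhlCS_succ {n : ℕ} (L : NBiHomLie K n g) (p : ℕ) :
    nbhlCentralSeries L (p + 1) = Submodule.span K
      {z | ∃ (a : g) (b : Fin n → g), a ∈ nbhlCentralSeries L p ∧ z = L.br (Fin.cons a b)} :=
  rfl

lemma nbhlCS_succ_le {n : ℕ} (L : NBiHomLie K n g) (p : ℕ) :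
    nbhlCentralSeries L (p + 1) ≤ nbhlCentralSeries L p := by
  induction p with
  | zero => exact le_top
  | succ p ih =>
    rw [nbhlCS_succ L (p + 1), Submodule.span_le]
    rintro z ⟨a, b, ha, rfl⟩
    rw [nbhlCS_succ L p]
    exact Submodule.subset_span ⟨a, b, ih ha, rfl⟩

lemma nbhlCS_antitone {n : ℕ} (L : NBiHomLie K n g) : Antitone (nbhlCentralSeries L) :=
  antitone_nat_of_succ_le (nbhlCS_succ_le L)

lemma nbhlCS_map {n : ℕ} (L : NBiHomLie K n g) (φ : g →ₗ[K] g) (hφ : Function.Bijective ⇑φ)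
    (hbr : ∀ x : Fin (n + 1) → g, φ (L.br x) = L.br fun i => φ (x i)) (p : ℕ) :
    Submodule.map φ (nbhlCentralSeries L p) = nbhlCentralSeries L p := by
  induction p with
  | zero =>
    show Submodule.map φ ⊤ = ⊤
    rw [Submodule.map_top, LinearMap.range_eq_top]
    exact hφ.2
  | succ p ih =>
    apply le_antisymm
    · rw [nbhlCS_succ, Submodule.map_span, Submodule.span_le]
      rintro z ⟨w, ⟨a, b, ha, rfl⟩, rfl⟩
      apply Submodule.subset_span
      refine ⟨φ a, fun i => φ (b i), ?_, ?_⟩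
      · rw [← ih]; exact Submodule.mem_map_of_mem ha
      · rw [hbr]; congr 1; funext i
        refine Fin.cases ?_ (fun i => ?_) i <;> simp
    · rw [nbhlCS_succ, Submodule.span_le]
      rintro z ⟨a, b, ha, rfl⟩
      rw [← ih] at ha
      obtain ⟨a', ha', rfl⟩ := ha
      have hb : ∀ i, φ (Function.invFun ⇑φ (b i)) = b i :=
        fun i => Function.rightInverse_invFun hφ.2 (b i)
      refine ⟨L.br (Fin.cons a' fun i => Function.invFun ⇑φ (b i)), ?_, ?_⟩
      · exact Submodule.subset_span ⟨a', _, ha', rfl⟩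
      · rw [hbr]; congr 1; funext i
        refine Fin.cases ?_ (fun i => ?_) i <;> simp [hb]

lemma nbhlCS_mem_map_iff {n : ℕ} (L : NBiHomLie K n g) (φ : g →ₗ[K] g)
    (hφ : Function.Bijective ⇑φ)
    (hbr : ∀ x : Fin (n + 1) → g, φ (L.br x) = L.br fun i => φ (x i)) (p : ℕ) (x : g) :
    φ x ∈ nbhlCentralSeries L p ↔ x ∈ nbhlCentralSeries L p := by
  constructor
  · intro h
    rw [← nbhlCS_map L φ hφ hbr p] at h
    obtain ⟨y, hy, hxy⟩ := h
    rwa [← hφ.1 hxy]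
  · intro h
    rw [← nbhlCS_map L φ hφ hbr p]
    exact ⟨x, h, rfl⟩

variable {m : ℕ} (L : NBiHomLie K (m + 1) g)

lemma tw_inv (hα : Function.Bijective ⇑L.α) (hβ : Function.Bijective ⇑L.β)
    (y : Fin (m + 2) → g) :
    twMap ⇑L.α ⇑L.β (fun t => if t = Fin.last (m + 1) then Function.invFun ⇑L.α (y t)
      else Function.invFun ⇑L.β (y t)) = y := by
  have ra : ∀ v, L.α (Function.invFun ⇑L.α v) = v := fun v => Function.rightInverse_invFun hα.2 v
  have rb : ∀ v, L.β (Function.invFun ⇑L.β v) = v := fun v => Function.rightInverse_invFun hβ.2 v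
  funext t
  by_cases ht : t = Fin.last (m + 1)
  · simp [twMap, ht, ra]
  · simp [twMap, ht, rb]

lemma br_swap (hα : Function.Bijective ⇑L.α) (hβ : Function.Bijective ⇑L.β)
    (y : Fin (m + 2) → g) (i j : Fin (m + 2)) (hij : (i : ℕ) + 1 = (j : ℕ))
    (hj : (j : ℕ) < m + 1) :
    L.br y = - L.br (y ∘ Equiv.swap i j) := by
  set x : Fin (m + 2) → g := fun t => if t = Fin.last (m + 1) then Function.invFun ⇑L.α (y t)
      else Function.invFun ⇑L.β (y t) with hx
  have hjne : j ≠ Fin.last (m + 1) := by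
    intro h; rw [h, Fin.val_last] at hj; omega
  have hine : i ≠ Fin.last (m + 1) := by
    intro h; rw [h, Fin.val_last] at hij; have := j.isLt; omega
  have h1 : twMap ⇑L.α ⇑L.β x = y := tw_inv L hα hβ y
  have h2 : twMap ⇑L.α ⇑L.β (x ∘ Equiv.swap i j) = y ∘ Equiv.swap i j := by
    have ra : ∀ v, L.α (Function.invFun ⇑L.α v) = v :=
      fun v => Function.rightInverse_invFun hα.2 v
    funext t
    by_cases ht : t = Fin.last (m + 1)
    · subst ht
      have hst : Equiv.swap i j (Fin.last (m + 1)) = Fin.last (m + 1) :=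
        Equiv.swap_apply_of_ne_of_ne (Ne.symm hine) (Ne.symm hjne)
      simp [twMap, Function.comp_apply, hst, hx, ra]
    · have hst : Equiv.swap i j t ≠ Fin.last (m + 1) := by
        rcases eq_or_ne t i with rfl | hti
        · rw [Equiv.swap_apply_left]; exact hjne
        · rcases eq_or_ne t j with rfl | htj
          · rw [Equiv.swap_apply_right]; exact hine
          · rw [Equiv.swap_apply_of_ne_of_ne hti htj]; exact ht
      have rb : ∀ v, L.β (Function.invFun ⇑L.β v) = v := fun v => Function.rightInverse_invFun hβ.2 v
      simp [twMap, Function.comp_apply, ht, hst, hx, rb]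
  have hsk := L.skew x i j hij
  rw [h1, h2] at hsk
  exact hsk

lemma br_mem_of_lt (hα : Function.Bijective ⇑L.α) (hβ : Function.Bijective ⇑L.β) (p : ℕ) :
    ∀ (jv : ℕ) (y : Fin (m + 2) → g) (j : Fin (m + 2)), (j : ℕ) = jv → (j : ℕ) < m + 1 →
      y j ∈ nbhlCentralSeries L p → L.br y ∈ nbhlCentralSeries L (p + 1) := by
  intro jv
  induction jv with
  | zero =>
    intro y j hj0 _ hy
    have hj : j = 0 := by
      apply Fin.ext; simp [hj0]
    subst hj
    exact Submodule.subset_span ⟨y 0, Fin.tail y, hy, by rw [Fin.cons_self_tail]⟩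
  | succ jv ih =>
    intro y j hj hlt hy
    have hjvlt : jv < m + 2 := by omega
    set i : Fin (m + 2) := ⟨jv, hjvlt⟩ with hi
    have hiv : (i : ℕ) = jv := rfl
    have hswap := br_swap L hα hβ y i j (by omega) hlt
    rw [hswap]
    apply Submodule.neg_mem
    apply ih (y ∘ Equiv.swap i j) i rfl (by omega)
    show y (Equiv.swap i j i) ∈ _
    rw [Equiv.swap_apply_left]
    exact hy

lemma br_mem (hα : Function.Bijective ⇑L.α) (hβ : Function.Bijective ⇑L.β) (p : ℕ)
    (y : Fin (m + 2) → g) (j : Fin (m + 2)) (hy : y j ∈ nbhlCentralSeries L p) :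
    L.br y ∈ nbhlCentralSeries L (p + 1) := by
  rcases lt_or_ge (j : ℕ) (m + 1) with hlt | hge
  · exact br_mem_of_lt L hα hβ p (j : ℕ) y j rfl hlt hy
  · have hj : j = Fin.last (m + 1) := by
      apply Fin.ext; have := j.isLt; simp [Fin.val_last]; omega
    subst hj
    have hmlt : m < m + 2 := by omega
    set im : Fin (m + 2) := ⟨m, hmlt⟩ with him
    have himne : im ≠ Fin.last (m + 1) := by
      simp [him, Fin.ext_iff, Fin.val_last]
    set y' : Fin (m + 2) → g := fun t =>
      if t = im then L.β (Function.invFun ⇑L.α (y (Fin.last (m + 1))))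
      else if t = Fin.last (m + 1) then L.α (Function.invFun ⇑L.β (y im))
      else y t with hy'
    have key : L.br y = - L.br y' := by
      set x : Fin (m + 2) → g := fun t => if t = Fin.last (m + 1) then Function.invFun ⇑L.α (y t)
          else Function.invFun ⇑L.β (y t) with hx
      have h1 : twMap ⇑L.α ⇑L.β x = y := tw_inv L hα hβ y
      have h2 : twMap ⇑L.α ⇑L.β (x ∘ Equiv.swap im (Fin.last (m + 1))) = y' := by
        have rb : ∀ v, L.β (Function.invFun ⇑L.β v) = v :=
          fun v => Function.rightInverse_invFun hβ.2 v
        funext t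
        by_cases h3 : t = im
        · subst h3
          have hst : Equiv.swap im (Fin.last (m + 1)) im = Fin.last (m + 1) :=
            Equiv.swap_apply_left _ _
          simp [twMap, Function.comp_apply, himne, hst, hx, hy']
        · by_cases h4 : t = Fin.last (m + 1)
          · subst h4
            have hst : Equiv.swap im (Fin.last (m + 1)) (Fin.last (m + 1)) = im :=
              Equiv.swap_apply_right _ _
            simp [twMap, Function.comp_apply, hst, hx, hy', himne, Ne.symm himne]
          · have hst : Equiv.swap im (Fin.last (m + 1)) t = t :=
              Equiv.swap_apply_of_ne_of_ne h3 h4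
            simp [twMap, Function.comp_apply, h4, hst, hx, hy', h3, rb]
      have himv : (im : ℕ) = m := rfl
      have hsk := L.skew x im (Fin.last (m + 1)) (by rw [himv, Fin.val_last])
      rw [h1, h2] at hsk
      exact hsk
    rw [key]
    apply Submodule.neg_mem
    have himv : (im : ℕ) = m := rfl
    apply br_mem_of_lt L hα hβ p m y' im rfl (by omega)
    have h5 : Function.invFun ⇑L.α (y (Fin.last (m + 1))) ∈ nbhlCentralSeries L p := by
      rw [← nbhlCS_mem_map_iff L L.α hα L.alpha_br p]
      rw [Function.rightInverse_invFun hα.2 _]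
      exact hy
    have h6 := (nbhlCS_mem_map_iff L L.β hβ L.beta_br p _).2 h5
    simpa [hy'] using h6

end AuxNilp
/-- **Nilpotency of the `T*_θ`-extension.** Let `(g,[·,…,·],α,β)` be an `n`-BiHom-Lie
algebra (`n = m + 2`) whose `T*_θ`-extension `g ⊕ g*` (built from the coadjoint
representation and an `n`-cocycle `θ`) is again an `n`-BiHom-Lie algebra `S`. If `g` is
nilpotent, then so is `S`. -/
theorem tstar_extension_nilpotent {K : Type u} [Field K] {m : ℕ} {g : Type v}
    [AddCommGroup g] [Module K g] (L : NBiHomLie K (m + 1) g)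
    (hα : Function.Bijective ⇑L.α) (hβ : Function.Bijective ⇑L.β)
    (θ : MultilinearMap K (fun _ : Fin (m + 2) => g) (Module.Dual K g))
    (hθ : IsCoadCocycle L ⇑θ)
    (S : NBiHomLie K (m + 1) (g × Module.Dual K g)) (hS : IsTStarExt L ⇑θ S)
    (hnilp : ∃ k, nbhlCentralSeries L k = ⊥) :
    ∃ k, nbhlCentralSeries S k = ⊥ := by
  obtain ⟨k, hk⟩ := hnilp
  have hbot : ∀ q, k ≤ q → nbhlCentralSeries L q = ⊥ :=
    fun q hq => le_bot_iff.1 (hk ▸ nbhlCS_antitone L hq)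
  have hfst : ∀ p, nbhlCentralSeries S p ≤
      Submodule.comap (LinearMap.fst K g (Module.Dual K g)) (nbhlCentralSeries L p) := by
    intro p
    induction p with
    | zero =>
      intro z _
      rw [Submodule.mem_comap, nbhlCS_zero]
      exact Submodule.mem_top
    | succ p ih =>
      rw [nbhlCS_succ, Submodule.span_le]
      rintro z ⟨a, b, ha, rfl⟩
      rw [SetLike.mem_coe, Submodule.mem_comap, LinearMap.fst_apply, hS.2.2.1]
      apply br_mem L hα hβ p _ 0
      have ha1 := ih ha
      rw [Submodule.mem_comap, LinearMap.fst_apply] at ha1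
      simpa using ha1
  have rb : ∀ v, L.β (Function.invFun ⇑L.β v) = v :=
    fun v => Function.rightInverse_invFun hβ.2 v
  have hinv0 : Function.invFun ⇑L.β (0 : g) = 0 := by
    have h := Function.leftInverse_invFun hβ.1 (0 : g)
    rwa [map_zero] at h
  have main : ∀ p, nbhlCentralSeries S (k + p) ≤
      (nbhlCentralSeries L (k + p)).prod
        ((nbhlCentralSeries L (k - p)).dualAnnihilator) := by
    intro p
    induction p with
    | zero =>
      intro z hz
      rw [Submodule.mem_prod]
      refine ⟨hfst (k + 0) hz, ?_⟩
      rw [Submodule.mem_dualAnnihilator]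
      intro w hw
      rw [Nat.sub_zero, hk, Submodule.mem_bot] at hw
      rw [hw, map_zero]
    | succ p ih =>
      have hkp : k + (p + 1) = (k + p) + 1 := by omega
      rw [hkp, nbhlCS_succ, Submodule.span_le]
      rintro z ⟨a, b, ha, rfl⟩
      have haQ := ih ha
      rw [Submodule.mem_prod] at haQ
      have ha1 : a.1 = 0 := by
        have h := haQ.1
        rwa [hbot (k + p) (by omega), Submodule.mem_bot] at h
      have ha2 := haQ.2
      rw [Submodule.mem_dualAnnihilator] at ha2
      rw [SetLike.mem_coe, Submodule.mem_prod]
      constructor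
      · rw [hS.2.2.1,
          MultilinearMap.map_coord_zero L.br (0 : Fin (m + 2)) (by simp [ha1])]
        exact Submodule.zero_mem _
      · rw [Submodule.mem_dualAnnihilator]
        intro w hw
        have hθ0 : θ (fun i => ((Fin.cons a b : Fin (m + 2) → g × Module.Dual K g) i).1) = 0 :=
          MultilinearMap.map_coord_zero θ (0 : Fin (m + 2)) (by simp [ha1])
        have hlast0 : L.br (Fin.snoc (fun j : Fin (m + 1) =>
            ((Fin.cons a b : Fin (m + 2) → g × Module.Dual K g) j.castSucc).1) w) = 0 := by
          apply MultilinearMap.map_coord_zero L.br ((0 : Fin (m + 1)).castSucc)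
          rw [Fin.snoc_castSucc]
          simp [ha1]
        rw [hS.2.2.2, hθ0, hlast0]
        simp only [LinearMap.zero_apply, map_zero, neg_zero, add_zero, zero_add]
        apply Finset.sum_eq_zero
        intro i _
        rcases eq_or_ne i 0 with rfl | hi
        · have key0 : ∀ (c : Fin m → g) (d : g),
              a.2 (Function.invFun ⇑L.β (L.α (L.br (Fin.snoc (Fin.snoc c d) w)))) = 0 := by
            intro c d
            apply ha2
            have hbrC : L.br (Fin.snoc (Fin.snoc c d) w)
                ∈ nbhlCentralSeries L (k - (p + 1) + 1) := by
              apply br_mem L hα hβ _ _ (Fin.last (m + 1))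
              rw [Fin.snoc_last]
              exact hw
            have hle := nbhlCS_antitone L (show k - p ≤ k - (p + 1) + 1 by omega)
            have h2 : L.α (L.br (Fin.snoc (Fin.snoc c d) w)) ∈ nbhlCentralSeries L (k - p) :=
              (nbhlCS_mem_map_iff L L.α hα L.alpha_br _ _).2 (hle hbrC)
            rw [← nbhlCS_mem_map_iff L L.β hβ L.beta_br (k - p), rb]
            exact h2
          simp only [Fin.castSucc_zero, Fin.cons_zero]
          rw [key0, neg_zero, smul_zero]
        · have him : 0 < m := by
            have h1 : (i : ℕ) ≠ 0 := fun h => hi (Fin.ext (by simp [h]))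
            have h2 := i.isLt
            omega
          set j0 : Fin m := ⟨0, him⟩ with hj0
          have hcsl : j0.castSucc < i := by
            rw [Fin.lt_def]
            have hv : (j0.castSucc : ℕ) = 0 := rfl
            rw [hv]
            exact Nat.pos_of_ne_zero (fun h => hi (Fin.ext (by simp [h])))
          have hsa : i.succAbove j0 = j0.castSucc := Fin.succAbove_of_castSucc_lt i j0 hcsl
          have h00 : (j0.castSucc).castSucc = (0 : Fin (m + 2)) := rfl
          have hbr0 : L.br (Fin.snoc (Fin.snoc
              (fun j : Fin m => ((Fin.cons a b : Fin (m + 2) → g × Module.Dual K g) ((i.succAbove j).castSucc)).1)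
              (Function.invFun ⇑L.α (L.β (((Fin.cons a b : Fin (m + 2) → g × Module.Dual K g) (Fin.last (m + 1))).1)))) w) = 0 := by
            apply MultilinearMap.map_coord_zero L.br ((j0.castSucc).castSucc)
            rw [Fin.snoc_castSucc, Fin.snoc_castSucc]
            simp [hsa, h00, ha1]
          rw [hbr0, map_zero, hinv0, map_zero, neg_zero, smul_zero]
  refine ⟨k + k, le_antisymm (fun z hz => ?_) bot_le⟩
  have h := main k hz
  rw [Submodule.mem_prod] at h
  have h1 : z.1 = 0 := by
    have h1' := h.1
    rwa [hbot (k + k) (by omega), Submodule.mem_bot] at h1'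
  have h2 : z.2 = 0 := by
    have h2' := h.2
    rw [Submodule.mem_dualAnnihilator] at h2'
    apply LinearMap.ext
    intro w
    rw [LinearMap.zero_apply]
    apply h2' w
    rw [Nat.sub_self, nbhlCS_zero]
    exact Submodule.mem_top
  rw [Submodule.mem_bot]
  exact Prod.ext h1 h2
end
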